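/- For every deterministic automaton A over a finite alphabet Σ there exists a deterministic automaton D over Σ such that: (1) D is almost equivalent to A; (2) every deterministic automaton over Σ (with finite state type) that is almost equivalent to A has at least as many states as D; and (3) any two states of D that are almost equivalent to each other lie in the same strongly connected component of D. -/

import Mathlib

/-- The run of the deterministic automaton `M` from state `q` on the infinite
word `x`. -/
def DFA.runFrom {α σ : Type*} (M : DFA α σ) (q : σ) (x : ℕ → α) : ℕ → σ
  | 0 => q
  | n + 1 => M.step (M.runFrom q x n) (x n)

/-- State `p` of `M₁` and state `q` of `M₂` are almost equivalent: for every
infinite word, the runs from `p` and from `q` disagree on membership in the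
accepting sets only at finitely many positions. -/
def AlmostEquiv {α σ₁ σ₂ : Type*} (M₁ : DFA α σ₁) (M₂ : DFA α σ₂)
    (p : σ₁) (q : σ₂) : Prop :=
  ∀ x : ℕ → α,
    {n : ℕ | (M₁.runFrom p x n ∈ M₁.accept) ≠ (M₂.runFrom q x n ∈ M₂.accept)}.Finite

/-- `q` is reachable from `p` in `M` (possibly on the empty word). -/
def Reach {α σ : Type*} (M : DFA α σ) (p q : σ) : Prop :=
  ∃ w : List α, M.evalFrom p w = q

/-!
Take `D` with the fewest states among the automata almost equivalent to `A`. If two states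
`s ≠ t` of `D` are almost equivalent but `t` is not reachable from `s`, delete `t` and redirect
every transition into `t` to `s`. A run of the new automaton follows the old one until it first
enters `t`; from then on it is the run from `s`, which never returns to `t`, so it differs from
the old run (now continuing from `t`) only finitely often. The result is almost equivalent to
`D` and smaller, contradicting minimality.
-/

variable {α : Type*}

theorem AlmostEquiv.symm {σ₁ σ₂ : Type*} {M₁ : DFA α σ₁} {M₂ : DFA α σ₂} {p : σ₁} {q : σ₂}
    (h : AlmostEquiv M₁ M₂ p q) : AlmostEquiv M₂ M₁ q p :=
  fun x => (h x).subset fun _ hn => Ne.symm hn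

theorem AlmostEquiv.trans {σ₁ σ₂ σ₃ : Type*} {M₁ : DFA α σ₁} {M₂ : DFA α σ₂} {M₃ : DFA α σ₃}
    {p : σ₁} {q : σ₂} {r : σ₃} (h₁₂ : AlmostEquiv M₁ M₂ p q) (h₂₃ : AlmostEquiv M₂ M₃ q r) :
    AlmostEquiv M₁ M₃ p r := by
  intro x
  refine ((h₁₂ x).union (h₂₃ x)).subset fun n hn => ?_
  by_contra h
  simp only [Set.mem_union, Set.mem_ofPred_eq, not_or, not_not] at h
  exact hn (h.1.trans h.2)

theorem almostEquiv_of_runFrom_eq {σ₁ σ₂ : Type*} {M₁ : DFA α σ₁} {M₂ : DFA α σ₂}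
    {p : σ₁} {q : σ₂}
    (h : ∀ x n, (M₁.runFrom p x n ∈ M₁.accept) = (M₂.runFrom q x n ∈ M₂.accept)) :
    AlmostEquiv M₁ M₂ p q :=
  fun x => Set.finite_empty.subset fun n hn => hn (h x n)

namespace DFA

variable {σ : Type*}

theorem runFrom_add (M : DFA α σ) (q : σ) (x : ℕ → α) (k m : ℕ) :
    M.runFrom q x (k + m) = M.runFrom (M.runFrom q x k) (fun i => x (k + i)) m := by
  induction m with
  | zero => rfl
  | succ m ih => exact congrArg (M.step · _) ih

theorem runFrom_eq_evalFrom (M : DFA α σ) (q : σ) (x : ℕ → α) (n : ℕ) :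
    M.runFrom q x n = M.evalFrom q ((List.range n).map x) := by
  induction n with
  | zero => rfl
  | succ n ih => rw [List.range_succ, List.map_append, List.map_singleton,
      evalFrom_append_singleton, ← ih]; rfl

theorem reach_runFrom (M : DFA α σ) (q : σ) (x : ℕ → α) (n : ℕ) :
    Reach M q (M.runFrom q x n) :=
  ⟨_, (M.runFrom_eq_evalFrom q x n).symm⟩

theorem runFrom_reindex {σ' : Type*} (M : DFA α σ) (g : σ ≃ σ') (q : σ) (x : ℕ → α) (n : ℕ) :
    (reindex g M).runFrom (g q) x n = g (M.runFrom q x n) := by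
  induction n with
  | zero => rfl
  | succ n ih =>
    change g (M.step (g.symm ((reindex g M).runFrom (g q) x n)) (x n)) = _
    rw [ih, Equiv.symm_apply_apply]
    rfl

theorem almostEquiv_reindex {σ' : Type*} (M : DFA α σ) (g : σ ≃ σ') (q : σ) :
    AlmostEquiv M (reindex g M) q (g q) :=
  almostEquiv_of_runFrom_eq fun x n => by
    rw [runFrom_reindex, reindex_apply_accept, Set.mem_preimage, Equiv.symm_apply_apply]

theorem finite_disagree_of_almostEquiv_runFrom {σ' : Type*} {M₁ : DFA α σ} {M₂ : DFA α σ'}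
    {p : σ} {q : σ'} (x : ℕ → α) (k : ℕ)
    (h : AlmostEquiv M₁ M₂ (M₁.runFrom p x k) (M₂.runFrom q x k)) :
    {n | (M₁.runFrom p x n ∈ M₁.accept) ≠ (M₂.runFrom q x n ∈ M₂.accept)}.Finite := by
  refine ((Set.finite_Iio k).union ((h fun i => x (k + i)).image (k + ·))).subset
    fun n hn => ?_
  rcases lt_or_ge n k with hlt | hge
  · exact Or.inl hlt
  · obtain ⟨m, rfl⟩ := Nat.exists_eq_add_of_le hge
    refine Or.inr ⟨m, ?_, rfl⟩
    simpa only [Set.mem_ofPred_eq, runFrom_add] using hn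

end DFA

section Merge

variable {σ : Type*} [DecidableEq σ] {p q : σ}

def redirect (hqp : q ≠ p) (s : σ) : {x // x ≠ p} :=
  if h : s = p then ⟨q, hqp⟩ else ⟨s, h⟩

theorem redirect_self (hqp : q ≠ p) : redirect hqp p = ⟨q, hqp⟩ := dif_pos rfl

theorem redirect_of_ne (hqp : q ≠ p) {s : σ} (h : s ≠ p) : redirect hqp s = ⟨s, h⟩ := dif_neg h

namespace DFA

def merge (M : DFA α σ) (p q : σ) (hqp : q ≠ p) : DFA α {x // x ≠ p} where
  step r a := redirect hqp (M.step r a)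
  start := redirect hqp M.start
  accept := Subtype.val ⁻¹' M.accept

variable (M : DFA α σ) (hqp : q ≠ p)

theorem runFrom_merge_val (r : {x // x ≠ p}) (x : ℕ → α) (n : ℕ)
    (h : ∀ m ≤ n, M.runFrom r x m ≠ p) :
    ((M.merge p q hqp).runFrom r x n).val = M.runFrom r x n := by
  induction n with
  | zero => rfl
  | succ n ih =>
    change (redirect hqp (M.step ((M.merge p q hqp).runFrom r x n).val (x n))).val = _
    rw [ih fun m hm => h m (by omega)]
    exact congrArg Subtype.val (redirect_of_ne hqp (h (n + 1) le_rfl))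

variable {M hqp}

theorem almostEquiv_merge_of_not_reach (hre : ¬ Reach M q p) :
    AlmostEquiv M (M.merge p q hqp) q ⟨q, hqp⟩ :=
  almostEquiv_of_runFrom_eq fun x n => by
    change _ = (((M.merge p q hqp).runFrom ⟨q, hqp⟩ x n).val ∈ M.accept)
    rw [runFrom_merge_val M hqp ⟨q, hqp⟩ x n fun m _ hm => hre (hm ▸ M.reach_runFrom q x m)]

theorem almostEquiv_merge (hpq : AlmostEquiv M M p q) (hre : ¬ Reach M q p)
    (r : {x // x ≠ p}) : AlmostEquiv M (M.merge p q hqp) r r := by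
  intro x
  by_cases hhit : ∃ n, M.runFrom r x n = p
  · obtain ⟨k, hk, hmin⟩ : ∃ k, M.runFrom r x k = p ∧ ∀ m < k, M.runFrom r x m ≠ p :=
      ⟨Nat.find hhit, Nat.find_spec hhit, fun _ => Nat.find_min hhit⟩
    cases k with
    | zero => exact absurd hk r.2
    | succ j =>
      have hmerged : (M.merge p q hqp).runFrom r x (j + 1) = ⟨q, hqp⟩ := by
        change redirect hqp (M.step ((M.merge p q hqp).runFrom r x j).val (x j)) = _
        rw [runFrom_merge_val M hqp r x j fun m hm => hmin m (by omega)]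
        exact (congrArg (redirect hqp) hk).trans (redirect_self hqp)
      refine finite_disagree_of_almostEquiv_runFrom x (j + 1) ?_
      rw [hk, hmerged]
      exact hpq.trans (almostEquiv_merge_of_not_reach hre)
  · refine Set.finite_empty.subset fun n hn => hn ?_
    change _ = (((M.merge p q hqp).runFrom r x n).val ∈ M.accept)
    rw [runFrom_merge_val M hqp r x n fun m _ hm => hhit ⟨m, hm⟩]

theorem almostEquiv_merge_redirect (hpq : AlmostEquiv M M p q) (hre : ¬ Reach M q p) (s : σ) :
    AlmostEquiv M (M.merge p q hqp) s (redirect hqp s) := by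
  by_cases hs : s = p
  · rw [hs, redirect_self]
    exact hpq.trans (almostEquiv_merge_of_not_reach hre)
  · rw [redirect_of_ne hqp hs]
    exact almostEquiv_merge hpq hre ⟨s, hs⟩

end DFA

end Merge

theorem exists_minimal_almostEquiv_general {α σ : Type} [Fintype σ]
    (A : DFA α σ) :
    ∃ (σD : Type) (_ : Fintype σD) (D : DFA α σD),
      AlmostEquiv A D A.start D.start ∧
      (∀ (σE : Type) (_ : Fintype σE) (E : DFA α σE),
        AlmostEquiv A E A.start E.start → Fintype.card σD ≤ Fintype.card σE) ∧
      (∀ s t : σD, AlmostEquiv D D s t → Reach D s t ∧ Reach D t s) := by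
  classical
  have hP : ∃ n, ∃ D : DFA α (Fin n), AlmostEquiv A D A.start D.start :=
    ⟨_, _, A.almostEquiv_reindex (Fintype.equivFin σ) A.start⟩
  obtain ⟨D, hD⟩ := Nat.find_spec hP
  have hmin (σE : Type) [Fintype σE] (E : DFA α σE) (hE : AlmostEquiv A E A.start E.start) :
      Nat.find hP ≤ Fintype.card σE :=
    Nat.find_min' hP ⟨_, hE.trans (E.almostEquiv_reindex (Fintype.equivFin σE) E.start)⟩
  have hreach (s t : Fin (Nat.find hP)) (hst : AlmostEquiv D D s t) : Reach D s t := by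
    by_contra hre
    have hne : s ≠ t := fun h => hre ⟨[], h⟩
    have hcard := hmin _ (D.merge t s hne) (hD.trans (D.almostEquiv_merge_redirect hst.symm hre _))
    rw [Fintype.card_subtype_compl, Fintype.card_fin, Fintype.card_unique] at hcard
    have : 0 < Nat.find hP := t.pos
    omega
  exact ⟨_, inferInstance, D, hD, fun σE _ E hE => (Fintype.card_fin _).trans_le (hmin σE E hE),
    fun s t hst => ⟨hreach s t hst, hreach t s hst.symm⟩⟩

theorem exists_minimal_almostEquiv {α σ : Type} [Fintype α] [Fintype σ]
    (A : DFA α σ) :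
    ∃ (σD : Type) (_ : Fintype σD) (D : DFA α σD),
      AlmostEquiv A D A.start D.start ∧
      (∀ (σE : Type) (_ : Fintype σE) (E : DFA α σE),
        AlmostEquiv A E A.start E.start → Fintype.card σD ≤ Fintype.card σE) ∧
      (∀ s t : σD, AlmostEquiv D D s t → Reach D s t ∧ Reach D t s) :=
  exists_minimal_almostEquiv_general A
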